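/- arXiv:2602.01052 — 2 statements merged into one kernel-verified Lean document; each statement's English description precedes it below -/
import Mathlib

section
/- For 0 < q < 1 and a complex number s with Re(s) > 0, the q-zeta function ζ_q(s) = \sum_{n \geq 1} (q^n/[n]_q)^s converges absolutely, and satisfies the translation formula q^s = (1 - q^s) ζ_q(s) + q^s \sum_{k \geq 0} (-1)^k \frac{s(s+1)\cdots(s+k)}{(k+1)!} ζ_q(s+k+1), where the series over k converges absolutely. -/
/-!
Write `t n = q^(n+1)/[n+1]_q`. Since `1/t (n+1) = (1 + 1/t n)/q`, the map `x ↦ q x/(1 + x)`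
sends `t n` to `t (n+1)`, so `t (n+1)^s - q^s t n^s = q^s t n^s ((1 + t n)^(-s) - 1)`.
Summed over `n`, the left side telescopes to `(1 - q^s) ζ_q(s) - q^s`; expanding the right side
by the binomial series (`t n < 1`) and swapping the two sums gives `-q^s` times the series in
`ζ_q(s+k+1)`. The swap is justified by `t n ≤ q^(n+1)`, which dominates the double series by a
product of two convergent series.
-/

open Complex

/-- The q-analogue `[n]_q = (1 - q^n)/(1 - q)`. -/
noncomputable def qNum (q : ℝ) (n : ℕ) : ℝ := (1 - q ^ n) / (1 - q)

/-- The SZ model q-zeta function `ζ_q(s) = ∑_{n ≥ 1} (q^n/[n]_q)^s`. -/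
noncomputable def qZeta (q : ℝ) (s : ℂ) : ℂ :=
  ∑' n : ℕ, ((q ^ (n + 1) / qNum q (n + 1) : ℝ) : ℂ) ^ s

open Finset

lemma Ring.choose_neg_eq_prod (s : ℂ) (n : ℕ) :
    Ring.choose (-s) n = (-1) ^ n * (∏ i ∈ range n, (s + (i : ℂ))) / (n.factorial : ℂ) := by
  rw [Ring.choose_eq_smul, smul_eq_mul, ← Polynomial.aeval_eq_smeval, Polynomial.aeval_def,
    Polynomial.eval₂_eq_eval_map, descPochhammer_map, descPochhammer_eval_eq_prod_range]
  simp_rw [show ∀ i : ℕ, -s - (i : ℂ) = -(s + i) from fun i => by ring]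
  rw [prod_neg, card_range, inv_mul_eq_div]

namespace Complex

lemma hasSum_choose_mul_pow (a : ℂ) {x : ℂ} (hx : ‖x‖ < 1) :
    HasSum (fun n => Ring.choose a n * x ^ n) ((1 + x) ^ a) := by
  have hmem : x ∈ Metric.eball (0 : ℂ) 1 := by
    rw [Metric.mem_eball, edist_zero_right, ← ofReal_norm]
    exact ENNReal.ofReal_lt_one.mpr hx
  simpa [binomialSeries, FormalMultilinearSeries.ofScalars_apply_eq, mul_comm] using
    (one_add_cpow_hasFPowerSeriesOnBall_zero (a := a)).hasSum hmem

lemma summable_norm_choose_mul_pow (a : ℂ) {r : ℝ} (hr0 : 0 ≤ r) (hr : r < 1) :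
    Summable fun n => ‖Ring.choose a n‖ * r ^ n := by
  have hlt : (r.toNNReal : ENNReal) < (binomialSeries ℂ a).radius :=
    lt_of_lt_of_le (by simpa using hr) binomialSeries_radius_ge_one
  simpa only [binomialSeries, FormalMultilinearSeries.ofScalars_norm, Real.coe_toNNReal _ hr0]
    using (binomialSeries ℂ a).summable_norm_mul_pow hlt

lemma cpow_add_natCast_succ {x : ℂ} (hx : x ≠ 0) (s : ℂ) (k : ℕ) :
    x ^ (s + k + 1) = x ^ s * x ^ (k + 1) := by
  rw [add_assoc, cpow_add _ _ hx, ← Nat.cast_add_one, cpow_natCast]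

lemma norm_ofReal_cpow_add_natCast_succ_le {x r : ℝ} (hx : 0 < x) (hxr : x ≤ r) (s : ℂ) (k : ℕ) :
    ‖(x : ℂ) ^ (s + k + 1)‖ ≤ ‖(x : ℂ) ^ s‖ * r ^ (k + 1) := by
  rw [cpow_add_natCast_succ (ofReal_ne_zero.mpr hx.ne'), norm_mul, norm_pow, norm_real,
    Real.norm_of_nonneg hx.le]
  gcongr

lemma hasSum_choose_neg_succ_mul_cpow {x : ℝ} (hx0 : 0 < x) (hx1 : x < 1) (s : ℂ) :
    HasSum (fun k : ℕ => Ring.choose (-s) (k + 1) * (x : ℂ) ^ (s + k + 1))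
      (((x / (1 + x) : ℝ) : ℂ) ^ s - (x : ℂ) ^ s) := by
  have hx : (x : ℂ) ≠ 0 := ofReal_ne_zero.mpr hx0.ne'
  have hbin := (hasSum_nat_add_iff' 1).mpr
    (hasSum_choose_mul_pow (-s) (x := x) (by rwa [norm_real, Real.norm_of_nonneg hx0.le]))
  simp only [range_one, sum_singleton, Ring.choose_zero_right, pow_zero, mul_one] at hbin
  have hval : (x : ℂ) ^ s * ((1 + x) ^ (-s) - 1) = ((x / (1 + x) : ℝ) : ℂ) ^ s - (x : ℂ) ^ s := by
    rw [ofReal_div, div_cpow_ofReal_nonneg hx0.le (by positivity), cpow_neg, ofReal_add,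
      ofReal_one, div_eq_mul_inv, mul_sub, mul_one]
  rw [← hval]
  refine (hbin.mul_left ((x : ℂ) ^ s)).congr_fun fun k => ?_
  rw [cpow_add_natCast_succ hx]
  ring

end Complex

section BinomialDoubleSeries

variable {t : ℕ → ℝ} {r : ℝ} {s : ℂ}

lemma summable_norm_choose_succ_mul_cpow (a : ℂ) (ht : ∀ n, 0 < t n) (htr : ∀ n, t n ≤ r)
    (hr : r < 1) (hs : Summable fun n => ‖(t n : ℂ) ^ s‖) :
    Summable fun p : ℕ × ℕ => ‖Ring.choose a (p.2 + 1) * (t p.1 : ℂ) ^ (s + p.2 + 1)‖ := by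
  have hr0 : 0 ≤ r := (ht 0).le.trans (htr 0)
  have hcoeff := (summable_nat_add_iff 1).mpr (Complex.summable_norm_choose_mul_pow a hr0 hr)
  refine Summable.of_nonneg_of_le (fun _ => norm_nonneg _) (fun p => ?_)
    (hs.mul_of_nonneg hcoeff (fun _ => norm_nonneg _) (fun _ => by positivity))
  rw [norm_mul]
  calc ‖Ring.choose a (p.2 + 1)‖ * ‖(t p.1 : ℂ) ^ (s + p.2 + 1)‖
      ≤ ‖Ring.choose a (p.2 + 1)‖ * (‖(t p.1 : ℂ) ^ s‖ * r ^ (p.2 + 1)) := by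
        gcongr
        exact Complex.norm_ofReal_cpow_add_natCast_succ_le (ht p.1) (htr p.1) s p.2
    _ = ‖(t p.1 : ℂ) ^ s‖ * (‖Ring.choose a (p.2 + 1)‖ * r ^ (p.2 + 1)) := by ring

lemma norm_tsum_cpow_add_natCast_succ_le (ht : ∀ n, 0 < t n) (htr : ∀ n, t n ≤ r)
    (hs : Summable fun n => ‖(t n : ℂ) ^ s‖) (k : ℕ) :
    ‖∑' n, (t n : ℂ) ^ (s + k + 1)‖ ≤ (∑' n, ‖(t n : ℂ) ^ s‖) * r ^ (k + 1) := by
  have hle n := Complex.norm_ofReal_cpow_add_natCast_succ_le (ht n) (htr n) s k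
  calc ‖∑' n, (t n : ℂ) ^ (s + k + 1)‖ ≤ ∑' n, ‖(t n : ℂ) ^ (s + k + 1)‖ :=
        norm_tsum_le_tsum_norm (.of_nonneg_of_le (fun _ => norm_nonneg _) hle (hs.mul_right _))
    _ ≤ ∑' n, ‖(t n : ℂ) ^ s‖ * r ^ (k + 1) :=
        Summable.tsum_le_tsum hle
          (.of_nonneg_of_le (fun _ => norm_nonneg _) hle (hs.mul_right _)) (hs.mul_right _)
    _ = (∑' n, ‖(t n : ℂ) ^ s‖) * r ^ (k + 1) := tsum_mul_right

lemma summable_norm_choose_succ_mul_tsum_cpow (a : ℂ) (ht : ∀ n, 0 < t n)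
    (htr : ∀ n, t n ≤ r) (hr : r < 1) (hs : Summable fun n => ‖(t n : ℂ) ^ s‖) :
    Summable fun k : ℕ => ‖Ring.choose a (k + 1) * ∑' n, (t n : ℂ) ^ (s + k + 1)‖ := by
  have hr0 : 0 ≤ r := (ht 0).le.trans (htr 0)
  have hcoeff := (summable_nat_add_iff 1).mpr (Complex.summable_norm_choose_mul_pow a hr0 hr)
  refine Summable.of_nonneg_of_le (fun _ => norm_nonneg _) (fun k => ?_)
    (hcoeff.mul_left (∑' n, ‖(t n : ℂ) ^ s‖))
  rw [norm_mul]
  calc ‖Ring.choose a (k + 1)‖ * ‖∑' n, (t n : ℂ) ^ (s + k + 1)‖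
      ≤ ‖Ring.choose a (k + 1)‖ * ((∑' n, ‖(t n : ℂ) ^ s‖) * r ^ (k + 1)) := by
        gcongr
        exact norm_tsum_cpow_add_natCast_succ_le ht htr hs k
    _ = (∑' n, ‖(t n : ℂ) ^ s‖) * (‖Ring.choose a (k + 1)‖ * r ^ (k + 1)) := by ring

lemma tsum_choose_succ_mul_tsum_cpow_comm (a : ℂ) (ht : ∀ n, 0 < t n) (htr : ∀ n, t n ≤ r)
    (hr : r < 1) (hs : Summable fun n => ‖(t n : ℂ) ^ s‖) :
    ∑' k : ℕ, Ring.choose a (k + 1) * ∑' n, (t n : ℂ) ^ (s + k + 1) =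
      ∑' n, ∑' k : ℕ, Ring.choose a (k + 1) * (t n : ℂ) ^ (s + k + 1) := by
  simp_rw [← tsum_mul_left]
  exact Summable.tsum_comm
    (Summable.of_norm (summable_norm_choose_succ_mul_cpow a ht htr hr hs))

end BinomialDoubleSeries

noncomputable def qZetaTerm (q : ℝ) (n : ℕ) : ℝ := q ^ (n + 1) / qNum q (n + 1)

lemma qZeta_eq_tsum_qZetaTerm (q : ℝ) (s : ℂ) :
    qZeta q s = ∑' n, (qZetaTerm q n : ℂ) ^ s := rfl

section qZetaTerm

variable {q : ℝ}

lemma qZetaTerm_eq (n : ℕ) :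
    qZetaTerm q n = q ^ (n + 1) * (1 - q) / (1 - q ^ (n + 1)) := by
  rw [qZetaTerm, qNum, div_div_eq_mul_div]

lemma qZetaTerm_pos (hq0 : 0 < q) (hq1 : q < 1) (n : ℕ) : 0 < qZetaTerm q n := by
  rw [qZetaTerm_eq]
  have hqn := pow_lt_one₀ hq0.le hq1 n.add_one_ne_zero
  exact div_pos (mul_pos (pow_pos hq0 _) (by linarith)) (by linarith)

lemma qZetaTerm_le_pow (hq0 : 0 < q) (hq1 : q < 1) (n : ℕ) : qZetaTerm q n ≤ q ^ (n + 1) := by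
  have h1 : 1 ≤ qNum q (n + 1) := by
    rw [qNum, one_le_div (by linarith)]
    linarith [pow_le_of_le_one hq0.le hq1.le (by omega : n + 1 ≠ 0)]
  exact div_le_self (pow_pos hq0 _).le h1

lemma qZetaTerm_le (hq0 : 0 < q) (hq1 : q < 1) (n : ℕ) : qZetaTerm q n ≤ q :=
  (qZetaTerm_le_pow hq0 hq1 n).trans (pow_le_of_le_one hq0.le hq1.le (by omega))

lemma qZetaTerm_zero (hq1 : q < 1) : qZetaTerm q 0 = q := by
  simp [qZetaTerm, qNum, div_self (sub_pos.mpr hq1).ne']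

lemma qZetaTerm_succ (hq0 : 0 < q) (hq1 : q < 1) (n : ℕ) :
    qZetaTerm q (n + 1) = q * (qZetaTerm q n / (1 + qZetaTerm q n)) := by
  have h1 : 1 - q ^ (n + 1) ≠ 0 := by linarith [pow_lt_one₀ hq0.le hq1 n.add_one_ne_zero]
  have h2 : 1 - q ^ (n + 1 + 1) ≠ 0 := by
    linarith [pow_lt_one₀ hq0.le hq1 (n + 1).add_one_ne_zero]
  have h3 : 1 + q ^ (n + 1) * (1 - q) / (1 - q ^ (n + 1)) =
      (1 - q ^ (n + 1 + 1)) / (1 - q ^ (n + 1)) := by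
    field_simp
    ring
  rw [qZetaTerm_eq, qZetaTerm_eq, h3]
  field_simp
  ring

lemma summable_norm_qZetaTerm_cpow (hq0 : 0 < q) (hq1 : q < 1) {s : ℂ} (hs : 0 < s.re) :
    Summable fun n => ‖(qZetaTerm q n : ℂ) ^ s‖ := by
  have hgeo : Summable fun n : ℕ => (q ^ s.re) ^ (n + 1) :=
    (summable_nat_add_iff 1).mpr (summable_geometric_of_lt_one (by positivity)
      (Real.rpow_lt_one hq0.le hq1 hs))
  refine Summable.of_nonneg_of_le (fun _ => norm_nonneg _) (fun n => ?_) hgeo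
  rw [Complex.norm_cpow_eq_rpow_re_of_pos (qZetaTerm_pos hq0 hq1 n), Real.rpow_pow_comm hq0.le]
  exact Real.rpow_le_rpow (qZetaTerm_pos hq0 hq1 n).le (qZetaTerm_le_pow hq0 hq1 n) hs.le

end qZetaTerm

lemma cpow_mul_tsum_choose_neg_succ_mul_qZeta {q : ℝ} (hq0 : 0 < q) (hq1 : q < 1) {s : ℂ}
    (hs : 0 < s.re) :
    (q : ℂ) ^ s * ∑' k : ℕ, Ring.choose (-s) (k + 1) * qZeta q (s + k + 1) =
      (qZeta q s - (q : ℂ) ^ s) - (q : ℂ) ^ s * qZeta q s := by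
  set t := qZetaTerm q
  have ht n : 0 < t n := qZetaTerm_pos hq0 hq1 n
  have htq n : t n ≤ q := qZetaTerm_le hq0 hq1 n
  have hsum : Summable fun n => (t n : ℂ) ^ s :=
    .of_norm (summable_norm_qZetaTerm_cpow hq0 hq1 hs)
  have hrow n := Complex.hasSum_choose_neg_succ_mul_cpow (ht n) ((htq n).trans_lt hq1) s
  have hstep n : (q : ℂ) ^ s * (((t n / (1 + t n) : ℝ) : ℂ) ^ s - (t n : ℂ) ^ s) =
      (t (n + 1) : ℂ) ^ s - (q : ℂ) ^ s * (t n : ℂ) ^ s := by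
    rw [mul_sub, ← mul_cpow_ofReal_nonneg hq0.le (by positivity [ht n]), ← ofReal_mul,
      ← qZetaTerm_succ hq0 hq1]
  calc (q : ℂ) ^ s * ∑' k : ℕ, Ring.choose (-s) (k + 1) * qZeta q (s + k + 1)
      = (q : ℂ) ^ s * ∑' n, ∑' k : ℕ, Ring.choose (-s) (k + 1) * (t n : ℂ) ^ (s + k + 1) := by
        simp_rw [qZeta_eq_tsum_qZetaTerm]
        rw [tsum_choose_succ_mul_tsum_cpow_comm (-s) ht htq hq1
          (summable_norm_qZetaTerm_cpow hq0 hq1 hs)]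
    _ = ∑' n, ((t (n + 1) : ℂ) ^ s - (q : ℂ) ^ s * (t n : ℂ) ^ s) := by
        simp_rw [(hrow _).tsum_eq, ← tsum_mul_left, hstep]
    _ = (qZeta q s - (q : ℂ) ^ s) - (q : ℂ) ^ s * qZeta q s := by
        rw [Summable.tsum_sub ((summable_nat_add_iff 1).mpr hsum) (hsum.mul_left _),
          tsum_mul_left, qZeta_eq_tsum_qZetaTerm, hsum.tsum_eq_zero_add,
          show t 0 = q from qZetaTerm_zero hq1]
        ring

theorem qZeta_translation (q : ℝ) (hq0 : 0 < q) (hq1 : q < 1)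
    (s : ℂ) (hs : 0 < s.re) :
    Summable (fun n : ℕ => ‖((q ^ (n + 1) / qNum q (n + 1) : ℝ) : ℂ) ^ s‖) ∧
    Summable (fun k : ℕ =>
      ‖(-1 : ℂ) ^ k * (∏ i ∈ Finset.range (k + 1), (s + (i : ℂ))) /
        ((k + 1).factorial : ℂ) * qZeta q (s + (k : ℂ) + 1)‖) ∧
    (q : ℂ) ^ s = (1 - (q : ℂ) ^ s) * qZeta q s +
      (q : ℂ) ^ s * ∑' k : ℕ,
        (-1 : ℂ) ^ k * (∏ i ∈ Finset.range (k + 1), (s + (i : ℂ))) /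
          ((k + 1).factorial : ℂ) * qZeta q (s + (k : ℂ) + 1) := by
  have hcoeff (k : ℕ) : (-1 : ℂ) ^ k * (∏ i ∈ Finset.range (k + 1), (s + (i : ℂ))) /
      ((k + 1).factorial : ℂ) = -Ring.choose (-s) (k + 1) := by
    rw [Ring.choose_neg_eq_prod, pow_succ]
    ring
  simp_rw [hcoeff, neg_mul, norm_neg, tsum_neg]
  refine ⟨summable_norm_qZetaTerm_cpow hq0 hq1 hs, ?_, ?_⟩
  · simp_rw [qZeta_eq_tsum_qZetaTerm]
    exact summable_norm_choose_succ_mul_tsum_cpow (-s) (qZetaTerm_pos hq0 hq1)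
      (qZetaTerm_le hq0 hq1) hq1 (summable_norm_qZetaTerm_cpow hq0 hq1 hs)
  · linear_combination cpow_mul_tsum_choose_neg_succ_mul_qZeta hq0 hq1 hs
end

section
/- Let S be a compact subset of {(s_1,...,s_r) ∈ ℂ^r : Re(s_1+...+s_j) > 0 for all j}, and let b = sup_{S} |s_1|. Then the family of functions f_{n_1,...,n_r,k}(s) = (-1)^k \frac{s_1(s_1+1)\cdots(s_1+k)}{(k+1)!} \frac{q^{n_1(s_1+k+1)} q^{n_2 s_2 + ... + n_r s_r}}{[n_1]^{s_1+k+1}[n_2]^{s_2}\cdots[n_r]^{s_r}}, indexed over n_1 > n_2 > ... > n_r ≥ 1 and k ≥ 0, is normally (uniformly absolutely) summable on S. -/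
/-!
Write `σ = Re s` and `t n = q ^ n / [n]`. As `1 ≤ [n] ≤ (1 - q)⁻¹` for `n ≥ 1`, the modulus
`t n ^ σ` of `t n ^ s` is at most `(1 - q)^(-R) q^(n σ)` whenever `|σ| ≤ R`. On the compact set `S`
the partial sums `σ₁ + ⋯ + σⱼ` are bounded below by some `δ > 0`, and Abel summation against the
decreasing sequence `n` gives `∑ nᵢ σᵢ ≥ δ n₁ ≥ (δ / r) ∑ nᵢ`. Hence the summands are dominated,
uniformly on `S`, by the product of the geometric series `(q^(δ / r))^(∑ nᵢ)` over `ℕ^r` and the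
series `∑ₖ R (R + 1) ⋯ (R + k) / (k + 1)! q^(k + 1)`, which converges by the ratio test.
-/

open Complex

open Finset Filter Topology

theorem summable_prod_apply_of_nonneg {ι κ : Type*} [Fintype ι]
    {f : ι → κ → ℝ} (hf : ∀ i, Summable (f i)) (hf0 : ∀ i k, 0 ≤ f i k) :
    Summable (fun x : ι → κ => ∏ i, f i (x i)) := by
  classical
  refine summable_of_sum_le (c := ∏ i, ∑' k, f i k)
    (fun x => prod_nonneg fun i _ => hf0 i _) fun u => ?_
  have hu : u ⊆ Fintype.piFinset fun i => u.image (· i) := fun x hx =>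
    Fintype.mem_piFinset.2 fun i => mem_image_of_mem _ hx
  calc ∑ x ∈ u, ∏ i, f i (x i)
      ≤ ∑ x ∈ Fintype.piFinset fun i => u.image (· i), ∏ i, f i (x i) :=
        sum_le_sum_of_subset_of_nonneg hu fun x _ _ => prod_nonneg fun i _ => hf0 i _
    _ = ∏ i, ∑ k ∈ u.image (· i), f i k := (prod_univ_sum _ _).symm
    _ ≤ ∏ i, ∑' k, f i k :=
        Finset.prod_le_prod (fun i _ => sum_nonneg fun k _ => hf0 i k)
          fun i _ => (hf i).sum_le_tsum _ fun k _ => hf0 i k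

theorem summable_pow_sum_of_lt_one {ι : Type*} [Fintype ι] {ρ : ℝ} (h0 : 0 ≤ ρ) (h1 : ρ < 1) :
    Summable (fun n : ι → ℕ => ρ ^ ∑ i, n i) := by
  simpa only [prod_pow_eq_pow_sum] using
    summable_prod_apply_of_nonneg (fun _ => summable_geometric_of_lt_one h0 h1)
      (fun _ _ => pow_nonneg h0 _)

theorem summable_prod_add_div_factorial_mul_pow (R : ℝ) {q : ℝ} (hq : |q| < 1) :
    Summable (fun k : ℕ =>
      (∏ i ∈ range (k + 1), (R + i)) / ((k + 1).factorial : ℝ) * q ^ (k + 1)) := by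
  set f : ℕ → ℝ := fun k =>
    (∏ i ∈ range (k + 1), (R + i)) / ((k + 1).factorial : ℝ) * q ^ (k + 1)
  have hstep : ∀ k, f (k + 1) = (R + (k + 1)) * q / (k + 2) * f k := by
    intro k
    simp only [f, prod_range_succ _ (k + 1), Nat.factorial_succ (k + 1), pow_succ]
    push_cast
    field_simp
    ring
  have hlim : Tendsto (fun k : ℕ => |(R + (k + 1)) * q / (k + 2)|) atTop (𝓝 |q|) := by
    have h := ((tendsto_add_mul_div_add_mul_atTop_nhds (R + 1) 2 1 one_ne_zero).mul_const q).abs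
    simp only [div_one, one_mul] at h
    refine h.congr fun k => ?_
    congr 1
    ring
  obtain ⟨c, hqc, hc1⟩ := exists_between hq
  refine summable_of_ratio_norm_eventually_le hc1 ?_
  filter_upwards [hlim.eventually (gt_mem_nhds hqc)] with k hk
  rw [hstep, norm_mul, Real.norm_eq_abs]
  exact mul_le_mul_of_nonneg_right hk.le (norm_nonneg _)

/-- Abel summation in layer-cake form: `m i` counts the levels `t < univ.sup m` with `t < m i`, and
for each such level `{i | t < m i}` is a nonempty initial segment of `ι`. -/
theorem mul_sup_le_sum_mul_of_antitone {ι : Type*} [Fintype ι] [LinearOrder ι] {m : ι → ℕ}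
    (hm : Antitone m) {σ : ι → ℝ} {δ : ℝ} (hσ : ∀ j, δ ≤ ∑ i ∈ univ.filter (· ≤ j), σ i) :
    δ * univ.sup m ≤ ∑ i, m i * σ i := by
  set M := univ.sup m
  have hlevel : ∀ t < M, δ ≤ ∑ i ∈ univ.filter (fun i => t < m i), σ i := by
    intro t ht
    obtain ⟨i, -, hi⟩ := Finset.lt_sup_iff.1 ht
    set j := (univ.filter (fun i => t < m i)).max' ⟨i, by simpa using hi⟩
    have hj : univ.filter (fun i => t < m i) = univ.filter (· ≤ j) := by
      ext i
      simp only [mem_filter, mem_univ, true_and]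
      exact ⟨fun h => le_max' _ _ (by simpa using h),
        fun h => (mem_filter.1 (max'_mem (univ.filter fun i => t < m i) _)).2.trans_le (hm h)⟩
    exact hj ▸ hσ j
  have hcount : ∀ i, ∑ t ∈ range M, (if t < m i then σ i else 0) = m i * σ i := by
    intro i
    have hi : m i ≤ M := le_sup (mem_univ i)
    have hlt : (range M).filter (· < m i) = range (m i) := by
      ext t
      simp only [mem_filter, mem_range]
      omega
    rw [← sum_filter, hlt, sum_const, card_range, nsmul_eq_mul]
  calc δ * M = ∑ t ∈ range M, δ := by simp [mul_comm]
    _ ≤ ∑ t ∈ range M, ∑ i ∈ univ.filter (fun i => t < m i), σ i :=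
        sum_le_sum fun t ht => hlevel t (mem_range.1 ht)
    _ = ∑ i, m i * σ i := by
        simp_rw [sum_filter]
        rw [sum_comm]
        exact sum_congr rfl fun i _ => hcount i

theorem rpow_sum_mul_le_pow_sum {ι : Type*} [Fintype ι] [LinearOrder ι] [Nonempty ι] {q : ℝ}
    (hq0 : 0 < q) (hq1 : q ≤ 1)
    {n : ι → ℕ} (hn : Antitone n) {σ : ι → ℝ} {δ : ℝ} (hδ : 0 ≤ δ)
    (hσ : ∀ j, δ ≤ ∑ i ∈ univ.filter (· ≤ j), σ i) :
    q ^ (∑ i, n i * σ i) ≤ (q ^ (δ / Fintype.card ι)) ^ (∑ i, n i) := by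
  have hsum : ((∑ i, n i : ℕ) : ℝ) ≤ Fintype.card ι * univ.sup n := by
    exact_mod_cast (sum_le_card_nsmul univ n _ fun i _ => le_sup (mem_univ i)).trans_eq
      (by simp)
  have hexp : δ / Fintype.card ι * (∑ i, n i : ℕ) ≤ ∑ i, n i * σ i :=
    calc δ / Fintype.card ι * (∑ i, n i : ℕ)
        ≤ δ / Fintype.card ι * (Fintype.card ι * univ.sup n) := by gcongr
      _ = δ * univ.sup n := by field_simp
      _ ≤ ∑ i, n i * σ i := mul_sup_le_sum_mul_of_antitone hn hσ
  rw [← Real.rpow_natCast, ← Real.rpow_mul hq0.le]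
  exact Real.rpow_le_rpow_of_exponent_ge hq0 hq1 hexp

theorem IsCompact.exists_pos_le_re_sum_filter_le {ι : Type*} [Fintype ι] [LinearOrder ι]
    {S : Set (ι → ℂ)} (hS : IsCompact S)
    (hSU : ∀ s ∈ S, ∀ j, 0 < (∑ i ∈ univ.filter (· ≤ j), s i).re) :
    ∃ δ > 0, ∀ s ∈ S, ∀ j, δ ≤ (∑ i ∈ univ.filter (· ≤ j), s i).re := by
  have h : ∀ j, ∀ᶠ δ in 𝓝[>] (0 : ℝ), ∀ s ∈ S, δ ≤ (∑ i ∈ univ.filter (· ≤ j), s i).re := by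
    intro j
    obtain ⟨δ, hδ, hle⟩ := hS.exists_forall_le' (by fun_prop) fun s hs => hSU s hs j
    filter_upwards [Ioo_mem_nhdsGT hδ] with d hd s hs using hd.2.le.trans (hle s hs)
  obtain ⟨δ, hδ, hδpos⟩ := ((eventually_all.2 h).and self_mem_nhdsWithin).exists
  exact ⟨δ, hδpos, fun s hs j => hδ j s hs⟩

section qNum

variable {q : ℝ}

theorem one_le_qNum (hq0 : 0 ≤ q) (hq1 : q < 1) {n : ℕ} (hn : 1 ≤ n) : 1 ≤ qNum q n := by
  rw [qNum, one_le_div (sub_pos.2 hq1)]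
  linarith [pow_le_of_le_one hq0 hq1.le (by omega : n ≠ 0)]

theorem qNum_le_inv_one_sub (hq0 : 0 ≤ q) (hq1 : q < 1) (n : ℕ) : qNum q n ≤ (1 - q)⁻¹ := by
  rw [qNum, div_eq_mul_inv]
  exact mul_le_of_le_one_left (inv_nonneg.2 (sub_pos.2 hq1).le)
    (by linarith [pow_nonneg hq0 n])

theorem pow_div_qNum_le (hq0 : 0 ≤ q) (hq1 : q < 1) {n : ℕ} (hn : 1 ≤ n) :
    q ^ n / qNum q n ≤ q :=
  (div_le_self (pow_nonneg hq0 n) (one_le_qNum hq0 hq1 hn)).trans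
    (pow_le_of_le_one hq0 hq1.le (by omega))

theorem pow_div_qNum_pos (hq0 : 0 < q) (hq1 : q < 1) {n : ℕ} (hn : 1 ≤ n) :
    0 < q ^ n / qNum q n :=
  div_pos (pow_pos hq0 n) (zero_lt_one.trans_le (one_le_qNum hq0.le hq1 hn))

theorem pow_div_qNum_rpow_le (hq0 : 0 < q) (hq1 : q < 1) {n : ℕ} (hn : 1 ≤ n) {x R : ℝ}
    (hx : |x| ≤ R) : (q ^ n / qNum q n) ^ x ≤ (1 - q)⁻¹ ^ R * q ^ (n * x) := by
  have hqn := one_le_qNum hq0.le hq1 hn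
  calc (q ^ n / qNum q n) ^ x = qNum q n ^ (-x) * q ^ (n * x) := by
        rw [Real.div_rpow (by positivity) (by positivity), Real.rpow_neg (by positivity),
          ← Real.rpow_natCast, ← Real.rpow_mul hq0.le]
        ring
    _ ≤ qNum q n ^ R * q ^ (n * x) := by
        gcongr
        exact (neg_le_abs x).trans hx
    _ ≤ (1 - q)⁻¹ ^ R * q ^ (n * x) := by
        gcongr
        exacts [(abs_nonneg x).trans hx, qNum_le_inv_one_sub hq0.le hq1 n]

variable {ι : Type*} [Fintype ι]

theorem prod_pow_div_qNum_rpow_le (hq0 : 0 < q) (hq1 : q < 1) {n : ι → ℕ} (hn : ∀ i, 1 ≤ n i)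
    {σ : ι → ℝ} {R : ℝ} (hσ : ∀ i, |σ i| ≤ R) :
    ∏ i, (q ^ n i / qNum q (n i)) ^ σ i
      ≤ ((1 - q)⁻¹ ^ R) ^ Fintype.card ι * q ^ (∑ i, n i * σ i) := by
  calc ∏ i, (q ^ n i / qNum q (n i)) ^ σ i ≤ ∏ i, ((1 - q)⁻¹ ^ R * q ^ (n i * σ i)) :=
        Finset.prod_le_prod
          (fun i _ => (Real.rpow_pos_of_pos (pow_div_qNum_pos hq0 hq1 (hn i)) _).le)
          fun i _ => pow_div_qNum_rpow_le hq0 hq1 (hn i) (hσ i)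
    _ = ((1 - q)⁻¹ ^ R) ^ Fintype.card ι * q ^ (∑ i, n i * σ i) := by
        rw [prod_mul_distrib, prod_const, card_univ, Real.rpow_sum_of_pos hq0]

end qNum

theorem norm_summand_le {ι : Type*} [Fintype ι] [LinearOrder ι] [DecidableEq ι] {q : ℝ}
    (hq0 : 0 < q) (hq1 : q < 1) (i₀ : ι) {R δ : ℝ} (hδ : 0 ≤ δ) {s : ι → ℂ} (hsR : ‖s‖ ≤ R)
    (hsδ : ∀ j, δ ≤ (∑ i ∈ univ.filter (· ≤ j), s i).re) {n : ι → ℕ} (hn : Antitone n)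
    (hn1 : ∀ i, 1 ≤ n i) (k : ℕ) :
    ‖(-1 : ℂ) ^ k * (∏ i ∈ range (k + 1), (s i₀ + (i : ℂ))) / ((k + 1).factorial : ℂ) *
        ∏ i, ((q ^ (n i) / qNum q (n i) : ℝ) : ℂ) ^
          (if i = i₀ then s i₀ + (k : ℂ) + 1 else s i)‖
      ≤ ((1 - q)⁻¹ ^ R) ^ Fintype.card ι * (q ^ (δ / Fintype.card ι)) ^ (∑ i, n i) *
        ((∏ i ∈ range (k + 1), (R + i)) / ((k + 1).factorial : ℝ) * q ^ (k + 1)) := by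
  have : Nonempty ι := ⟨i₀⟩
  set t : ι → ℝ := fun i => q ^ n i / qNum q (n i)
  have ht : ∀ i, 0 < t i := fun i => pow_div_qNum_pos hq0 hq1 (hn1 i)
  have hsi : ∀ i, ‖s i‖ ≤ R := fun i => (norm_le_pi_norm s i).trans hsR
  have hcoeff : ‖(-1 : ℂ) ^ k * (∏ i ∈ range (k + 1), (s i₀ + (i : ℂ))) /
      ((k + 1).factorial : ℂ)‖ ≤ (∏ i ∈ range (k + 1), (R + i)) / ((k + 1).factorial : ℝ) := by
    rw [norm_div, norm_mul, norm_pow, norm_neg, norm_one, one_pow, one_mul, norm_prod,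
      Complex.norm_natCast]
    gcongr with i
    exact (norm_add_le _ _).trans (by simpa using hsi i₀)
  have hre : ∀ i, (if i = i₀ then s i₀ + (k : ℂ) + 1 else s i).re
      = (s i).re + if i = i₀ then ((k + 1 : ℕ) : ℝ) else 0 := by
    intro i
    split_ifs with h
    · simp [h, add_assoc]
    · simp
  have hprod : ‖∏ i, ((t i : ℝ) : ℂ) ^ (if i = i₀ then s i₀ + (k : ℂ) + 1 else s i)‖
      = (∏ i, t i ^ (s i).re) * t i₀ ^ (k + 1) := by
    simp_rw [norm_prod, norm_cpow_eq_rpow_re_of_pos (ht _), hre, Real.rpow_add (ht _),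
      prod_mul_distrib, apply_ite, Real.rpow_zero, Real.rpow_natCast, prod_ite_eq']
    simp
  have hσ := prod_pow_div_qNum_rpow_le hq0 hq1 hn1
    (fun i => (abs_re_le_norm (s i)).trans (hsi i))
  have hρ := rpow_sum_mul_le_pow_sum hq0 hq1.le hn hδ (fun j => by simpa [re_sum] using hsδ j)
  have ht₀ : t i₀ ^ (k + 1) ≤ q ^ (k + 1) :=
    pow_le_pow_left₀ (ht i₀).le (pow_div_qNum_le hq0.le hq1 (hn1 i₀)) _
  have hR : 0 ≤ R := (norm_nonneg s).trans hsR
  rw [norm_mul, hprod]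
  calc _ ≤ (∏ i ∈ range (k + 1), (R + i)) / ((k + 1).factorial : ℝ) *
        ((((1 - q)⁻¹ ^ R) ^ Fintype.card ι * (q ^ (δ / Fintype.card ι)) ^ (∑ i, n i)) *
          q ^ (k + 1)) :=
        mul_le_mul hcoeff (mul_le_mul (hσ.trans (by gcongr)) ht₀ (pow_nonneg (ht i₀).le _)
          (by positivity))
          (mul_nonneg (prod_nonneg fun i _ => (Real.rpow_pos_of_pos (ht i) _).le)
            (pow_nonneg (ht i₀).le _)) (by positivity)
    _ = _ := by ring

theorem normally_summable_on_compact (q : ℝ) (hq0 : 0 < q) (hq1 : q < 1)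
    (r : ℕ) (hr : 2 ≤ r) (S : Set (Fin r → ℂ)) (hS : IsCompact S)
    (hSU : ∀ s ∈ S, ∀ j : Fin r, 0 < (∑ i ∈ Finset.univ.filter (· ≤ j), s i).re) :
    Summable (fun nk :
        {n : Fin r → ℕ // (∀ i j : Fin r, i < j → n j < n i) ∧ ∀ i, 1 ≤ n i} × ℕ =>
      ⨆ s : S, ‖(-1 : ℂ) ^ nk.2 *
          (∏ i ∈ Finset.range (nk.2 + 1), (s.1 (⟨0, by omega⟩ : Fin r) + (i : ℂ))) /
          ((nk.2 + 1).factorial : ℂ) *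
          ∏ i : Fin r, ((q ^ (nk.1.1 i) / qNum q (nk.1.1 i) : ℝ) : ℂ) ^
            (if i = (⟨0, by omega⟩ : Fin r) then s.1 (⟨0, by omega⟩ : Fin r) + (nk.2 : ℂ) + 1 else s.1 i)‖) := by
  obtain ⟨R, hR, hSR⟩ := hS.isBounded.exists_pos_norm_le
  obtain ⟨δ, hδ, hSδ⟩ := hS.exists_pos_le_re_sum_filter_le hSU
  have hρ0 : 0 ≤ q ^ (δ / Fintype.card (Fin r)) := Real.rpow_nonneg hq0.le _
  have hρ1 : q ^ (δ / Fintype.card (Fin r)) < 1 :=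
    Real.rpow_lt_one hq0.le hq1 (div_pos hδ (by simp only [Fintype.card_fin, Nat.cast_pos]; omega))
  have hC : 0 ≤ (1 - q)⁻¹ ^ R := Real.rpow_nonneg (inv_nonneg.2 (sub_pos.2 hq1).le) R
  refine .of_nonneg_of_le (fun _ => Real.iSup_nonneg fun _ => norm_nonneg _)
    (fun nk => Real.iSup_le (fun s => norm_summand_le hq0 hq1 _ hδ.le (hSR s s.2) (hSδ s s.2)
      (StrictAnti.antitone fun i j h => nk.1.2.1 i j h) nk.1.2.2 nk.2) (by positivity)) ?_
  exact (((summable_pow_sum_of_lt_one hρ0 hρ1).comp_injective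
    Subtype.val_injective).mul_left _).mul_of_nonneg
      (summable_prod_add_div_factorial_mul_pow R (abs_lt.2 ⟨by linarith, hq1⟩))
      (fun _ => mul_nonneg (pow_nonneg hC _) (pow_nonneg hρ0 _)) (fun _ => by positivity)
end
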